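/- arXiv:1802.06123 — 2 statements merged into one kernel-verified Lean document; each statement's English description precedes it below -/
import Mathlib

section
/- Suppose Q = A_P D_V + (A_V D_P)^T has the boundary structure Q = -e_L p_Lᵀ + e_R p_Rᵀ, where e_L, e_R are the first and last standard basis vectors of ℝ^{N_P} and p_L, p_R ∈ ℝ^{N_V}. Then along solutions of the penalized system A_P P' = -A_P D_V V, A_V V' = -A_V D_P P + σ_L p_L (e_Lᵀ P) + σ_R p_R (e_Rᵀ P) with σ_L = -1 and σ_R = 1, the discrete energy E = (1/2)Pᵀ A_P P + (1/2)Vᵀ A_V V is constant in time. -/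
/-!
Differentiating the energy gives `Pᵀ A_P P' + Vᵀ A_V V'`. Substituting the equations of motion, the
interior terms combine into `Pᵀ Q V`, which the boundary structure of `Q` reduces to
`-(e_Lᵀ P)(p_Lᵀ V) + (e_Rᵀ P)(p_Rᵀ V)`; the penalty terms contribute
`σ_L (e_Lᵀ P)(p_Lᵀ V) + σ_R (e_Rᵀ P)(p_Rᵀ V)`, so with `σ_L = -1`, `σ_R = 1` the rate vanishes.
-/

open Matrix

section Calculus

variable {𝕜 n : Type*} [NontriviallyNormedField 𝕜] [Fintype n] {f g : 𝕜 → n → 𝕜} {f' g' : n → 𝕜}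
  {t : 𝕜}

theorem HasDerivAt.dotProduct (hf : HasDerivAt f f' t) (hg : HasDerivAt g g' t) :
    HasDerivAt (fun s => f s ⬝ᵥ g s) (f' ⬝ᵥ g t + f t ⬝ᵥ g') t := by
  have hfg : ∀ i ∈ Finset.univ, HasDerivAt (fun s => f s i * g s i)
      (f' i * g t i + f t i * g' i) t := fun i _ =>
    (hasDerivAt_pi.mp hf i).mul (hasDerivAt_pi.mp hg i)
  exact (HasDerivAt.fun_sum hfg).congr_deriv Finset.sum_add_distrib

theorem HasDerivAt.mulVec {m : Type*} (A : Matrix m n 𝕜) (hf : HasDerivAt f f' t) :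
    HasDerivAt (fun s => A *ᵥ f s) (A *ᵥ f') t :=
  hasDerivAt_pi.mpr fun i =>
    ((hasDerivAt_const t (A i)).dotProduct hf).congr_deriv (by simp [Matrix.mulVec])

theorem HasDerivAt.half_dotProduct_mulVec_self [CharZero 𝕜] {A : Matrix n n 𝕜} (hA : A.IsSymm)
    (hf : HasDerivAt f f' t) :
    HasDerivAt (fun s => 1 / 2 * (f s ⬝ᵥ A *ᵥ f s)) (f t ⬝ᵥ A *ᵥ f') t := by
  refine ((hf.dotProduct (hf.mulVec A)).const_mul (1 / 2 : 𝕜)).congr_deriv ?_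
  rw [← dotProduct_transpose_mulVec, hA.eq]
  field_simp
  ring

end Calculus

section Energy

variable {R m n : Type*} [CommRing R] [Fintype m] [Fintype n]

theorem dotProduct_vecMulVec_mulVec (x u : m → R) (v y : n → R) :
    x ⬝ᵥ vecMulVec u v *ᵥ y = (u ⬝ᵥ x) * (v ⬝ᵥ y) := by
  rw [vecMulVec_mulVec, dotProduct_comm u x]
  simp [dotProduct_smul, mul_comm]

theorem dotProduct_mulVec_add_dotProduct_mulVec_of_boundary {B : Matrix m n R}
    {C : Matrix n m R} {eL eR : m → R} {pL pR : n → R}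
    (hQ : B + Cᵀ = -vecMulVec eL pL + vecMulVec eR pR) (x : m → R) (y : n → R) :
    x ⬝ᵥ B *ᵥ y + y ⬝ᵥ C *ᵥ x = -((eL ⬝ᵥ x) * (pL ⬝ᵥ y)) + (eR ⬝ᵥ x) * (pR ⬝ᵥ y) := by
  rw [← dotProduct_transpose_mulVec C x y, ← dotProduct_add, ← add_mulVec, hQ, add_mulVec,
    neg_mulVec, dotProduct_add, dotProduct_neg, dotProduct_vecMulVec_mulVec,
    dotProduct_vecMulVec_mulVec]

theorem energy_rate_of_boundary {AP : Matrix m m R} {AV : Matrix n n R}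
    {DV : Matrix m n R} {DP : Matrix n m R} {eL eR : m → R} {pL pR : n → R}
    (hQ : AP * DV + (AV * DP)ᵀ = -vecMulVec eL pL + vecMulVec eR pR) (σL σR : R)
    {p p' : m → R} {v v' : n → R} (hp : AP *ᵥ p' = -((AP * DV) *ᵥ v))
    (hv : AV *ᵥ v' = -((AV * DP) *ᵥ p) + (σL * (eL ⬝ᵥ p)) • pL + (σR * (eR ⬝ᵥ p)) • pR) :
    p ⬝ᵥ AP *ᵥ p' + v ⬝ᵥ AV *ᵥ v' =
      (σL + 1) * (eL ⬝ᵥ p) * (pL ⬝ᵥ v) + (σR - 1) * (eR ⬝ᵥ p) * (pR ⬝ᵥ v) := by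
  have hbdry := dotProduct_mulVec_add_dotProduct_mulVec_of_boundary hQ p v
  rw [hp, hv]
  simp only [dotProduct_neg, dotProduct_add, dotProduct_smul, smul_eq_mul,
    dotProduct_comm v pL, dotProduct_comm v pR]
  linear_combination -hbdry

end Energy

theorem stmt2_general {NP NV : ℕ}
    (AP : Matrix (Fin (NP + 1)) (Fin (NP + 1)) ℝ) (AV : Matrix (Fin NV) (Fin NV) ℝ)
    (DV : Matrix (Fin (NP + 1)) (Fin NV) ℝ) (DP : Matrix (Fin NV) (Fin (NP + 1)) ℝ)
    (hAP : AP.PosDef) (hAV : AV.PosDef)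
    (pL pR : Fin NV → ℝ)
    (eL eR : Fin (NP + 1) → ℝ)
    (hQ : AP * DV + (AV * DP)ᵀ = -vecMulVec eL pL + vecMulVec eR pR)
    (σL σR : ℝ) (hσL : σL = -1) (hσR : σR = 1)
    (P : ℝ → Fin (NP + 1) → ℝ) (V : ℝ → Fin NV → ℝ)
    (P' : ℝ → Fin (NP + 1) → ℝ) (V' : ℝ → Fin NV → ℝ)
    (hP : ∀ t, HasDerivAt P (P' t) t) (hV : ∀ t, HasDerivAt V (V' t) t)
    (hPode : ∀ t, AP.mulVec (P' t) = -((AP * DV).mulVec (V t)))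
    (hVode : ∀ t, AV.mulVec (V' t) =
      -((AV * DP).mulVec (P t)) + (σL * (eL ⬝ᵥ P t)) • pL + (σR * (eR ⬝ᵥ P t)) • pR)
    (E : ℝ → ℝ)
    (hE : ∀ t, E t = (1/2) * (P t ⬝ᵥ AP.mulVec (P t)) + (1/2) * (V t ⬝ᵥ AV.mulVec (V t))) :
    ∀ t s, E t = E s := by
  have hAPs : AP.IsSymm := isHermitian_iff_isSymm.mp hAP.isHermitian
  have hAVs : AV.IsSymm := isHermitian_iff_isSymm.mp hAV.isHermitian
  have hE' : ∀ t, HasDerivAt E 0 t := fun t => by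
    have hrate := energy_rate_of_boundary hQ σL σR (hPode t) (hVode t)
    rw [hσL, hσR] at hrate
    rw [funext hE]
    refine (((hP t).half_dotProduct_mulVec_self hAPs).add
      ((hV t).half_dotProduct_mulVec_self hAVs)).congr_deriv ?_
    rw [hrate]
    ring
  exact fun t s => is_const_of_deriv_eq_zero (fun x => (hE' x).differentiableAt)
    (fun x => (hE' x).deriv) t s

/-- Energy conservation for the SAT-penalized 1D boundary system with σL = -1, σR = 1. -/
theorem stmt2 {NP NV : ℕ}
    (AP : Matrix (Fin (NP + 1)) (Fin (NP + 1)) ℝ) (AV : Matrix (Fin NV) (Fin NV) ℝ)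
    (DV : Matrix (Fin (NP + 1)) (Fin NV) ℝ) (DP : Matrix (Fin NV) (Fin (NP + 1)) ℝ)
    (hAP : AP.PosDef) (hAV : AV.PosDef)
    (pL pR : Fin NV → ℝ)
    (eL eR : Fin (NP + 1) → ℝ)
    (heL : eL = Pi.single 0 1) (heR : eR = Pi.single (Fin.last NP) 1)
    (hQ : AP * DV + (AV * DP)ᵀ = -vecMulVec eL pL + vecMulVec eR pR)
    (σL σR : ℝ) (hσL : σL = -1) (hσR : σR = 1)
    (P : ℝ → Fin (NP + 1) → ℝ) (V : ℝ → Fin NV → ℝ)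
    (P' : ℝ → Fin (NP + 1) → ℝ) (V' : ℝ → Fin NV → ℝ)
    (hP : ∀ t, HasDerivAt P (P' t) t) (hV : ∀ t, HasDerivAt V (V' t) t)
    (hPode : ∀ t, AP.mulVec (P' t) = -((AP * DV).mulVec (V t)))
    (hVode : ∀ t, AV.mulVec (V' t) =
      -((AV * DP).mulVec (P t)) + (σL * (eL ⬝ᵥ P t)) • pL + (σR * (eR ⬝ᵥ P t)) • pR)
    (E : ℝ → ℝ)
    (hE : ∀ t, E t = (1/2) * (P t ⬝ᵥ AP.mulVec (P t)) + (1/2) * (V t ⬝ᵥ AV.mulVec (V t))) :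
    ∀ t s, E t = E s :=
  stmt2_general AP AV DV DP hAP hAV pL pR eL eR hQ σL σR hσL hσR P V P' V' hP hV hPode hVode E hE
end

section
/- For the 2D SAT-penalized system imposing free-surface boundary conditions with penalty parameters σ_L = −1, σ_R = 1, σ_B = −1, σ_T = 1, the discrete energy E = (1/2)(PᵀA_P P + UᵀA_U U + VᵀA_V V) is conserved: dE/dt = 0. -/
open Matrix
open scoped Kronecker

/-! The SAT penalty terms of the `U`- and `V`-equations are `Bx *ᵥ P` and `By *ᵥ P` for Kronecker
matrices `Bx`, `By`, and with `σL = σB = -1`, `σR = σT = 1` their transposes are exactly the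
summation-by-parts boundary matrices `Q_x`, `Q_y`. In
`dE/dt = P ⬝ᵥ A_P P' + U ⬝ᵥ A_U U' + V ⬝ᵥ A_V V'` the difference terms then add up to
`-P ⬝ᵥ Q_x U - P ⬝ᵥ Q_y V`, which the penalty terms cancel. -/

section
variable {ι κ μ ν : Type*} [Fintype ι] [Fintype κ]

theorem dotProduct_mulVec_comm (M : Matrix ι κ ℝ) (x : ι → ℝ) (y : κ → ℝ) :
    x ⬝ᵥ M *ᵥ y = y ⬝ᵥ Mᵀ *ᵥ x := by
  rw [dotProduct_mulVec, ← mulVec_transpose, dotProduct_comm]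

theorem HasDerivAt.dotProduct_mulVec_self {A : Matrix ι ι ℝ} (hA : A.IsSymm)
    {X : ℝ → ι → ℝ} {X' : ι → ℝ} {t : ℝ} (hX : HasDerivAt X X' t) :
    HasDerivAt (fun s => X s ⬝ᵥ A *ᵥ X s) (2 * (X t ⬝ᵥ A *ᵥ X')) t := by
  have hXi := hasDerivAt_pi.1 hX
  have hsum : HasDerivAt (fun s => ∑ i, X s i * ∑ j, A i j * X s j)
      (∑ i, (X' i * ∑ j, A i j * X t j + X t i * ∑ j, A i j * X' j)) t :=
    HasDerivAt.fun_sum fun i _ =>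
      (hXi i).mul (HasDerivAt.fun_sum fun j _ => (hXi j).const_mul (A i j))
  refine hsum.congr_deriv ?_
  rw [Finset.sum_add_distrib, two_mul]
  change X' ⬝ᵥ A *ᵥ X t + X t ⬝ᵥ A *ᵥ X' = X t ⬝ᵥ A *ᵥ X' + X t ⬝ᵥ A *ᵥ X'
  rw [dotProduct_mulVec_comm A X', hA.eq]

theorem kronecker_vecMulVec_mulVec (p : μ → ℝ) (e : ι → ℝ) (a : Matrix ν κ ℝ)
    (P : ι × κ → ℝ) :
    (vecMulVec p e ⊗ₖ a) *ᵥ P = fun q => p q.1 * a.mulVec (fun j => e ⬝ᵥ fun i => P (i, j)) q.2 := by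
  ext ⟨k, l⟩
  simp only [mulVec, dotProduct, kroneckerMap_apply, vecMulVec_apply, Fintype.sum_prod_type,
    Finset.mul_sum]
  rw [Finset.sum_comm]
  exact Finset.sum_congr rfl fun j _ => Finset.sum_congr rfl fun i _ => by ring

theorem kronecker_vecMulVec_right_mulVec (a : Matrix ν ι ℝ) (p : μ → ℝ) (e : κ → ℝ)
    (P : ι × κ → ℝ) :
    (a ⊗ₖ vecMulVec p e) *ᵥ P = fun q => p q.2 * a.mulVec (fun i => e ⬝ᵥ fun j => P (i, j)) q.1 := by
  ext ⟨l, k⟩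
  simp only [mulVec, dotProduct, kroneckerMap_apply, vecMulVec_apply, Fintype.sum_prod_type,
    Finset.mul_sum]
  exact Finset.sum_congr rfl fun i _ => Finset.sum_congr rfl fun j _ => by ring

theorem dotProduct_mulVec_add_dotProduct_mulVec {M : Matrix ι κ ℝ} {N B : Matrix κ ι ℝ}
    (h : M + Nᵀ = Bᵀ) (p : ι → ℝ) (u : κ → ℝ) :
    p ⬝ᵥ M *ᵥ u + u ⬝ᵥ N *ᵥ p = u ⬝ᵥ B *ᵥ p := by
  rw [dotProduct_mulVec_comm N, dotProduct_mulVec_comm B, ← dotProduct_add, ← add_mulVec, h]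

end

theorem sbp_sat_energy_rate_eq_zero {ιp ιu ιv : Type*} [Fintype ιp] [Fintype ιu] [Fintype ιv]
    {AP : Matrix ιp ιp ℝ} {AU : Matrix ιu ιu ℝ} {AV : Matrix ιv ιv ℝ}
    {DxU : Matrix ιp ιu ℝ} {DyV : Matrix ιp ιv ℝ} {DxP Bx : Matrix ιu ιp ℝ}
    {DyP By : Matrix ιv ιp ℝ}
    (hQx : AP * DxU + (AU * DxP)ᵀ = Bxᵀ) (hQy : AP * DyV + (AV * DyP)ᵀ = Byᵀ)
    {p p' : ιp → ℝ} {u u' : ιu → ℝ} {v v' : ιv → ℝ}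
    (hp : AP *ᵥ p' = -((AP * DxU) *ᵥ u) - (AP * DyV) *ᵥ v)
    (hu : AU *ᵥ u' = -((AU * DxP) *ᵥ p) + Bx *ᵥ p)
    (hv : AV *ᵥ v' = -((AV * DyP) *ᵥ p) + By *ᵥ p) :
    p ⬝ᵥ AP *ᵥ p' + u ⬝ᵥ AU *ᵥ u' + v ⬝ᵥ AV *ᵥ v' = 0 := by
  have hx := dotProduct_mulVec_add_dotProduct_mulVec hQx p u
  have hy := dotProduct_mulVec_add_dotProduct_mulVec hQy p v
  rw [hp, hu, hv]
  simp only [dotProduct_sub, dotProduct_add, dotProduct_neg]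
  linarith

/-- Energy conservation for the 2D SAT-penalized free-surface system with
    σL = -1, σR = 1, σB = -1, σT = 1. -/
theorem stmt10 {kp ku m n : ℕ}
    (axp : Matrix (Fin kp) (Fin kp) ℝ) (axu : Matrix (Fin ku) (Fin ku) ℝ)
    (ayp : Matrix (Fin m) (Fin m) ℝ) (ayv : Matrix (Fin n) (Fin n) ℝ)
    (haxp : axp.IsDiag ∧ axp.PosDef) (haxu : axu.IsDiag ∧ axu.PosDef)
    (hayp : ayp.IsDiag ∧ ayp.PosDef) (hayv : ayv.IsDiag ∧ ayv.PosDef)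
    (DxU : Matrix (Fin kp × Fin m) (Fin ku × Fin m) ℝ)
    (DyV : Matrix (Fin kp × Fin m) (Fin kp × Fin n) ℝ)
    (DxP : Matrix (Fin ku × Fin m) (Fin kp × Fin m) ℝ)
    (DyP : Matrix (Fin kp × Fin n) (Fin kp × Fin m) ℝ)
    (exL exR : Fin kp → ℝ) (pxL pxR : Fin ku → ℝ)
    (eyL eyR : Fin m → ℝ) (pyL pyR : Fin n → ℝ)
    (hQx : (axp ⊗ₖ ayp) * DxU + ((axu ⊗ₖ ayp) * DxP)ᵀ =
      -(vecMulVec exL pxL ⊗ₖ ayp) + vecMulVec exR pxR ⊗ₖ ayp)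
    (hQy : (axp ⊗ₖ ayp) * DyV + ((axp ⊗ₖ ayv) * DyP)ᵀ =
      axp ⊗ₖ (-vecMulVec eyL pyL + vecMulVec eyR pyR))
    (σL σR σB σT : ℝ) (hσ : σL = -1 ∧ σR = 1 ∧ σB = -1 ∧ σT = 1)
    (P : ℝ → Fin kp × Fin m → ℝ) (U : ℝ → Fin ku × Fin m → ℝ)
    (V : ℝ → Fin kp × Fin n → ℝ)
    (P' : ℝ → Fin kp × Fin m → ℝ) (U' : ℝ → Fin ku × Fin m → ℝ)
    (V' : ℝ → Fin kp × Fin n → ℝ)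
    (hP : ∀ t, HasDerivAt P (P' t) t) (hU : ∀ t, HasDerivAt U (U' t) t)
    (hV : ∀ t, HasDerivAt V (V' t) t)
    (hPode : ∀ t, (axp ⊗ₖ ayp).mulVec (P' t) =
      -(((axp ⊗ₖ ayp) * DxU).mulVec (U t)) - ((axp ⊗ₖ ayp) * DyV).mulVec (V t))
    (hUode : ∀ t, (axu ⊗ₖ ayp).mulVec (U' t) = -(((axu ⊗ₖ ayp) * DxP).mulVec (P t))
      + σL • (fun q : Fin ku × Fin m =>
          pxL q.1 * ayp.mulVec (fun j => exL ⬝ᵥ fun i => P t (i, j)) q.2)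
      + σR • (fun q : Fin ku × Fin m =>
          pxR q.1 * ayp.mulVec (fun j => exR ⬝ᵥ fun i => P t (i, j)) q.2))
    (hVode : ∀ t, (axp ⊗ₖ ayv).mulVec (V' t) = -(((axp ⊗ₖ ayv) * DyP).mulVec (P t))
      + σB • (fun q : Fin kp × Fin n =>
          pyL q.2 * axp.mulVec (fun i => eyL ⬝ᵥ fun j => P t (i, j)) q.1)
      + σT • (fun q : Fin kp × Fin n =>
          pyR q.2 * axp.mulVec (fun i => eyR ⬝ᵥ fun j => P t (i, j)) q.1))
    (E : ℝ → ℝ)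
    (hE : ∀ t, E t = (1/2) * (P t ⬝ᵥ (axp ⊗ₖ ayp).mulVec (P t)
      + U t ⬝ᵥ (axu ⊗ₖ ayp).mulVec (U t) + V t ⬝ᵥ (axp ⊗ₖ ayv).mulVec (V t))) :
    ∀ t, HasDerivAt E 0 t := by
  intro t
  obtain ⟨hσL, hσR, hσB, hσT⟩ := hσ
  set Bx := σL • (vecMulVec pxL exL ⊗ₖ ayp) + σR • (vecMulVec pxR exR ⊗ₖ ayp)
  set By := σB • (axp ⊗ₖ vecMulVec pyL eyL) + σT • (axp ⊗ₖ vecMulVec pyR eyR)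
  have hBx : Bxᵀ = -(vecMulVec exL pxL ⊗ₖ ayp) + vecMulVec exR pxR ⊗ₖ ayp := by
    simp only [Bx, transpose_add, ← kroneckerMap_transpose, transpose_vecMulVec,
      hayp.1.isSymm.eq, hσL, hσR, neg_one_smul, one_smul, transpose_neg]
  have hBy : Byᵀ = axp ⊗ₖ (-vecMulVec eyL pyL + vecMulVec eyR pyR) := by
    rw [kronecker_add, ← neg_one_smul ℝ (vecMulVec eyL pyL), kronecker_smul]
    simp only [By, transpose_add, transpose_smul, ← kroneckerMap_transpose, transpose_vecMulVec,
      haxp.1.isSymm.eq, hσB, hσT, one_smul]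
  have hu : (axu ⊗ₖ ayp) *ᵥ U' t = -(((axu ⊗ₖ ayp) * DxP) *ᵥ P t) + Bx *ᵥ P t := by
    rw [hUode t, add_mulVec, smul_mulVec, smul_mulVec, kronecker_vecMulVec_mulVec,
      kronecker_vecMulVec_mulVec, add_assoc]
  have hv : (axp ⊗ₖ ayv) *ᵥ V' t = -(((axp ⊗ₖ ayv) * DyP) *ᵥ P t) + By *ᵥ P t := by
    rw [hVode t, add_mulVec, smul_mulVec, smul_mulVec, kronecker_vecMulVec_right_mulVec,
      kronecker_vecMulVec_right_mulVec, add_assoc]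
  have hrate := sbp_sat_energy_rate_eq_zero (hQx.trans hBx.symm) (hQy.trans hBy.symm)
    (hPode t) hu hv
  have hderiv := ((((hP t).dotProduct_mulVec_self (haxp.1.kronecker hayp.1).isSymm).add
    ((hU t).dotProduct_mulVec_self (haxu.1.kronecker hayp.1).isSymm)).add
    ((hV t).dotProduct_mulVec_self (haxp.1.kronecker hayv.1).isSymm)).const_mul (1 / 2 : ℝ)
  rw [show E = _ from funext hE]
  refine hderiv.congr_deriv ?_
  linarith
end
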